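/- Suppose n ≥ 1. Every error vector e in (Fin n → ZMod 2) has at most two children, i.e. the set {v : v ≠ 0 ∧ π(v) = e} has cardinality at most 2. Moreover, the zero vector has exactly one child, namely δ_0 (so {v : v ≠ 0 ∧ π(v) = 0} = {δ_0}), and if e ≠ 0 and j*(e) = n − 1 then e has no children. -/

import Mathlib

/-- The index of the least reliable flipped bit: the largest coordinate `j`
with `e j ≠ 0` (as a natural number; `0` if `e = 0`). -/
def jstar {n : ℕ} (e : Fin n → ZMod 2) : ℕ :=
  (Finset.univ.filter fun j => e j ≠ 0).sup fun j => (j : ℕ)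

/-- The parent `π(e)` of an error vector: zero out coordinate `j*(e)` and,
if `j*(e) > 0`, set coordinate `j*(e) - 1` to `1`; `π(0) = 0`. -/
def parent {n : ℕ} (e : Fin n → ZMod 2) : Fin n → ZMod 2 :=
  if e = 0 then 0
  else fun j =>
    if (j : ℕ) = jstar e then 0
    else if 0 < jstar e ∧ (j : ℕ) = jstar e - 1 then 1
    else e j
/-- `deltaN k` is the vector with a `1` at the coordinate of index `k` and `0` elsewhere. -/
def deltaN {n : ℕ} (k : ℕ) : Fin n → ZMod 2 := fun i => if (i : ℕ) = k then 1 else 0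

/-- The children set `C(e)`. -/
def children {n : ℕ} (e : Fin n → ZMod 2) : Finset (Fin n → ZMod 2) :=
  if e = 0 then {deltaN 0}
  else if jstar e = n - 1 then ∅
  else {e + deltaN (jstar e + 1), e + deltaN (jstar e) + deltaN (jstar e + 1)}

/-!
A nonzero `v` with `j*(v) = 0` is `δ₀`, whose parent is `0`. If `j*(v) = J + 1`, then `π(v)`
has its last `1` at `J`, so `j*(π(v)) = J`, and `v` is recovered from `π(v)` by restoring the
bit at `J + 1` and, when `v J = 0`, clearing the bit `π` set at `J`. Hence every nonzero `v`
lies in `children (π v)`, a set with at most two elements that is `{δ₀}` over `0` and empty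
when `j*(e) = n - 1`.
-/

open Finset

lemma ZMod.eq_one_of_ne_zero (x : ZMod 2) (hx : x ≠ 0) : x = 1 :=
  Fin.eq_one_of_ne_zero x hx

variable {n : ℕ}

lemma le_jstar {e : Fin n → ZMod 2} {j : Fin n} (h : e j ≠ 0) : (j : ℕ) ≤ jstar e :=
  le_sup (f := fun j : Fin n => (j : ℕ)) (by simpa using h)

lemma apply_eq_zero_of_jstar_lt {e : Fin n → ZMod 2} {j : Fin n} (h : jstar e < j) :
    e j = 0 :=
  not_not.mp fun hj => (le_jstar hj).not_gt h

lemma exists_apply_jstar_eq_one {e : Fin n → ZMod 2} (he : e ≠ 0) :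
    ∃ j : Fin n, (j : ℕ) = jstar e ∧ e j = 1 := by
  obtain ⟨j, hj⟩ := Function.ne_iff.mp he
  obtain ⟨i, hi, hsup⟩ := exists_mem_eq_sup (univ.filter fun j => e j ≠ 0)
    ⟨j, by simpa using hj⟩ fun j : Fin n => (j : ℕ)
  exact ⟨i, hsup.symm, ZMod.eq_one_of_ne_zero _ (mem_filter.mp hi).2⟩

lemma jstar_eq_of_apply_ne_zero {e : Fin n → ZMod 2} {j : Fin n} (hj : e j ≠ 0)
    (h : ∀ k : Fin n, j < k → e k = 0) : jstar e = j :=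
  le_antisymm
    (Finset.sup_le fun k hk => not_lt.mp fun hjk => (mem_filter.mp hk).2 (h k hjk))
    (le_jstar hj)

lemma parent_apply {v : Fin n → ZMod 2} (hv : v ≠ 0) (k : Fin n) :
    parent v k = if (k : ℕ) = jstar v then 0
      else if 0 < jstar v ∧ (k : ℕ) = jstar v - 1 then 1 else v k := by
  simp [parent, hv]

lemma eq_deltaN_zero_of_jstar_eq_zero {v : Fin n → ZMod 2} (hv : v ≠ 0) (h : jstar v = 0) :
    v = deltaN 0 := by
  obtain ⟨j, hj, hvj⟩ := exists_apply_jstar_eq_one hv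
  funext k
  rcases Nat.eq_zero_or_pos k with hk | hk
  · rw [Fin.ext (hk.trans (h ▸ hj).symm), hvj]; simp [deltaN, hj, h]
  · simp [deltaN, hk.ne', apply_eq_zero_of_jstar_lt (h ▸ hk : jstar v < k)]

lemma parent_of_jstar_eq_zero {v : Fin n → ZMod 2} (h : jstar v = 0) : parent v = 0 := by
  by_cases hv : v = 0
  · simp [parent, hv]
  funext k
  rw [parent_apply hv, h]
  rcases Nat.eq_zero_or_pos k with hk | hk
  · simp [hk]
  · simp [hk.ne', apply_eq_zero_of_jstar_lt (h ▸ hk : jstar v < k)]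

lemma parent_apply_eq_one_of_jstar_eq_succ {v : Fin n → ZMod 2} (hv : v ≠ 0) {J : ℕ}
    (h : jstar v = J + 1) (hJ : J < n) : parent v ⟨J, hJ⟩ = 1 := by
  simp [parent_apply hv, h]

lemma jstar_parent_of_jstar_eq_succ {v : Fin n → ZMod 2} (hv : v ≠ 0) {J : ℕ}
    (h : jstar v = J + 1) (hJ : J < n) : jstar (parent v) = J := by
  refine jstar_eq_of_apply_ne_zero (j := ⟨J, hJ⟩)
    (by simp [parent_apply_eq_one_of_jstar_eq_succ hv h hJ]) fun k hk => ?_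
  have hJk : J < k := hk
  rw [parent_apply hv, h]
  by_cases hkJ : (k : ℕ) = J + 1
  · simp [hkJ]
  · simp [hkJ, hJk.ne', apply_eq_zero_of_jstar_lt (show jstar v < k by omega)]

lemma apply_eq_parent_add_of_jstar_eq_succ {v : Fin n → ZMod 2} (hv : v ≠ 0) {J : ℕ}
    (h : jstar v = J + 1) (hJ : J < n) (k : Fin n) :
    v k = parent v k + deltaN (J + 1) k + if v ⟨J, hJ⟩ = 0 then deltaN J k else 0 := by
  rcases eq_or_ne (k : ℕ) (J + 1) with h1 | h1
  · obtain ⟨j, hj, hvj⟩ := exists_apply_jstar_eq_one hv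
    obtain rfl : k = j := Fin.ext (h1.trans (h ▸ hj).symm)
    simp [deltaN, parent_apply hv, h, h1, hvj]
  rcases eq_or_ne (k : ℕ) J with h2 | h2
  · obtain rfl : k = ⟨J, hJ⟩ := Fin.ext h2
    have hpJ := parent_apply_eq_one_of_jstar_eq_succ hv h hJ
    by_cases hvJ : v ⟨J, hJ⟩ = 0
    · simp [deltaN, hpJ, hvJ]
      decide
    · simpa [deltaN, hpJ, hvJ] using ZMod.eq_one_of_ne_zero _ hvJ
  · simp [deltaN, parent_apply hv, h, h1, h2]

lemma mem_children_parent {v : Fin n → ZMod 2} (hv : v ≠ 0) : v ∈ children (parent v) := by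
  rcases hjv : jstar v with _ | J
  · rw [parent_of_jstar_eq_zero hjv]
    simp [children, eq_deltaN_zero_of_jstar_eq_zero hv hjv]
  obtain ⟨j, hj, -⟩ := exists_apply_jstar_eq_one hv
  have hJn : J < n := by omega
  have hpne : parent v ≠ 0 := fun h0 => by
    simpa [h0] using parent_apply_eq_one_of_jstar_eq_succ hv hjv hJn
  simp only [children, if_neg hpne, jstar_parent_of_jstar_eq_succ hv hjv hJn,
    if_neg (show J ≠ n - 1 by omega), mem_insert, mem_singleton]
  have hcoord := apply_eq_parent_add_of_jstar_eq_succ hv hjv hJn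
  by_cases hvJ : v ⟨J, hJn⟩ = 0
  · right
    funext k
    rw [hcoord k, if_pos hvJ, add_right_comm]
    rfl
  · left
    funext k
    simp [hcoord k, hvJ]

lemma card_children_le_two (e : Fin n → ZMod 2) : (children e).card ≤ 2 := by
  unfold children
  split_ifs
  · simp
  · simp
  · exact card_le_two

lemma deltaN_ne_zero {k : ℕ} (hk : k < n) : (deltaN k : Fin n → ZMod 2) ≠ 0 :=
  Function.ne_iff.mpr ⟨⟨k, hk⟩, by simp [deltaN]⟩

lemma jstar_deltaN {k : ℕ} (hk : k < n) : jstar (deltaN k : Fin n → ZMod 2) = k :=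
  jstar_eq_of_apply_ne_zero (j := ⟨k, hk⟩) (by simp [deltaN]) fun i hi => by
    simp [deltaN, (Fin.lt_def.mp hi).ne']

lemma filter_parent_eq_subset_children (e : Fin n → ZMod 2) :
    (univ.filter fun v : Fin n → ZMod 2 => v ≠ 0 ∧ parent v = e) ⊆ children e := by
  intro v hv
  obtain ⟨hv0, rfl⟩ := (mem_filter.mp hv).2
  exact mem_children_parent hv0

theorem children_count {n : ℕ} (hn : 1 ≤ n) :
    (∀ e : Fin n → ZMod 2,
      (Finset.univ.filter fun v : Fin n → ZMod 2 => v ≠ 0 ∧ parent v = e).card ≤ 2) ∧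
    (Finset.univ.filter fun v : Fin n → ZMod 2 => v ≠ 0 ∧ parent v = 0)
      = {deltaN 0} ∧
    (∀ e : Fin n → ZMod 2, e ≠ 0 → jstar e = n - 1 →
      (Finset.univ.filter fun v : Fin n → ZMod 2 => v ≠ 0 ∧ parent v = e) = ∅) := by
  refine ⟨fun e => (card_le_card (filter_parent_eq_subset_children e)).trans
    (card_children_le_two e), ?_, fun e he hj => ?_⟩
  · have hsub := filter_parent_eq_subset_children (0 : Fin n → ZMod 2)
    rw [children, if_pos rfl] at hsub
    refine hsub.antisymm ?_
    simpa using ⟨deltaN_ne_zero hn, parent_of_jstar_eq_zero (jstar_deltaN hn)⟩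
  · simpa [children, he, hj] using filter_parent_eq_subset_children e
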